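/- Suppose in each epoch i' ∈ [1, i−1] the adversary can produce at most λ candidate beacon values, each candidate beacon independently (via a random oracle) yields a committee with no honest member with probability at most f^m, and a candidate from epoch i' ends up being used as the beacon in epoch i with probability at most (f^τ + 0.14)^{i−i'−1}/0.9. Then, by a union bound, the probability that the committee for a given slot in epoch i contains no honest member is at most λ·f^m/(0.9·(0.86 − f^τ)), provided f^τ < 0.86. -/
import Mathlib


open MeasureTheory

/-- Union bound for bad committees: in each epoch `i' ∈ [1, i-1]` there are at most
`lam` candidate beacons; for each, the "bad committee" event has probability at most
`f^m`, the "candidate used in epoch i" event has probability at most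
`(f^τ + 0.14)^(i - i' - 1) / 0.9`, and the two are independent. If a bad committee in
epoch `i` requires both events for some candidate, then the probability that the
committee for a given slot in epoch `i` contains no honest member is at most
`lam * f^m / (0.9 * (0.86 - f^τ))`, provided `f^τ < 0.86`. -/
theorem bad_committee_union_bound {α : Type*} [MeasurableSpace α]
    (μ : Measure α) [IsProbabilityMeasure μ]
    (f : ℝ) (m τ lam i : ℕ)
    (hf0 : 0 ≤ f) (hf : f ≤ 0.99) (hfτ : f ^ τ < 0.86) (hi : 2 ≤ i)
    (Bad Used : ℕ → Fin lam → Set α) (NoHonest : Set α)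
    (hBad : ∀ i' ∈ Finset.Icc 1 (i - 1), ∀ k,
      μ (Bad i' k) ≤ ENNReal.ofReal (f ^ m))
    (hUsed : ∀ i' ∈ Finset.Icc 1 (i - 1), ∀ k,
      μ (Used i' k) ≤ ENNReal.ofReal ((f ^ τ + 0.14) ^ (i - i' - 1) / 0.9))
    (hInd : ∀ i' ∈ Finset.Icc 1 (i - 1), ∀ k,
      μ (Bad i' k ∩ Used i' k) = μ (Bad i' k) * μ (Used i' k))
    (hcover : NoHonest ⊆ ⋃ i' ∈ Finset.Icc 1 (i - 1), ⋃ k, Bad i' k ∩ Used i' k) :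
    μ NoHonest ≤ ENNReal.ofReal (lam * f ^ m / (0.9 * (0.86 - f ^ τ))) := by
  set b : ℝ := f ^ τ + 0.14 with hb
  have hb0 : 0 ≤ b := by positivity
  have hb1 : b < 1 := by simp only [hb]; linarith
  have hfm : (0:ℝ) ≤ f ^ m := by positivity
  -- bound each term
  have hterm : ∀ i' ∈ Finset.Icc 1 (i - 1), ∀ k : Fin lam,
      μ (Bad i' k ∩ Used i' k) ≤ ENNReal.ofReal (f ^ m * (b ^ (i - i' - 1) / 0.9)) := by
    intro i' hi' k
    rw [hInd i' hi' k]
    refine le_trans (mul_le_mul' (hBad i' hi' k) (hUsed i' hi' k)) ?_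
    rw [← ENNReal.ofReal_mul hfm]
  calc μ NoHonest ≤ μ (⋃ i' ∈ Finset.Icc 1 (i - 1), ⋃ k, Bad i' k ∩ Used i' k) :=
        measure_mono hcover
    _ ≤ ∑ i' ∈ Finset.Icc 1 (i - 1), μ (⋃ k, Bad i' k ∩ Used i' k) :=
        measure_biUnion_finset_le _ _
    _ ≤ ∑ i' ∈ Finset.Icc 1 (i - 1), ∑ k : Fin lam, μ (Bad i' k ∩ Used i' k) :=
        Finset.sum_le_sum fun i' _ => measure_iUnion_fintype_le _ _
    _ ≤ ∑ i' ∈ Finset.Icc 1 (i - 1), ∑ _k : Fin lam,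
          ENNReal.ofReal (f ^ m * (b ^ (i - i' - 1) / 0.9)) := by
        refine Finset.sum_le_sum fun i' hi' => Finset.sum_le_sum fun k _ => hterm i' hi' k
    _ = ENNReal.ofReal (∑ i' ∈ Finset.Icc 1 (i - 1),
          (lam : ℝ) * (f ^ m * (b ^ (i - i' - 1) / 0.9))) := by
        rw [ENNReal.ofReal_sum_of_nonneg (fun i' _ => by positivity)]
        refine Finset.sum_congr rfl fun i' _ => ?_
        rw [Finset.sum_const, Finset.card_univ, Fintype.card_fin, nsmul_eq_mul,
          ← ENNReal.ofReal_natCast lam, ← ENNReal.ofReal_mul (by positivity)]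
    _ ≤ ENNReal.ofReal (lam * f ^ m / (0.9 * (0.86 - f ^ τ))) := by
        apply ENNReal.ofReal_le_ofReal
        have hgeom : ∑ i' ∈ Finset.Icc 1 (i - 1), b ^ (i - i' - 1) ≤ (1 - b)⁻¹ := by
          have hre : ∑ i' ∈ Finset.Icc 1 (i - 1), b ^ (i - i' - 1)
              = ∑ j ∈ Finset.range (i - 1), b ^ j := by
            refine Finset.sum_nbij' (fun i' => i - 1 - i') (fun j => i - 1 - j)
              ?_ ?_ ?_ ?_ ?_
            · intro a ha
              simp only [Finset.mem_Icc] at ha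
              simp only [Finset.mem_range]
              omega
            · intro a ha
              simp only [Finset.mem_range] at ha
              simp only [Finset.mem_Icc]
              omega
            · intro a ha; simp only [Finset.mem_Icc] at ha; omega
            · intro a ha; simp only [Finset.mem_range] at ha; omega
            · intro a ha
              simp only [Finset.mem_Icc] at ha
              congr 1
              omega
          rw [hre]
          exact Summable.sum_le_tsum _ (fun j _ => by positivity)
            (summable_geometric_of_lt_one hb0 hb1) |>.trans
            (le_of_eq (tsum_geometric_of_lt_one hb0 hb1))
        have h1b : 1 - b = 0.86 - f ^ τ := by simp only [hb]; ring
        have hpos : (0:ℝ) < 0.86 - f ^ τ := by linarith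
        calc ∑ i' ∈ Finset.Icc 1 (i - 1), (lam : ℝ) * (f ^ m * (b ^ (i - i' - 1) / 0.9))
            = (lam * f ^ m / 0.9) * ∑ i' ∈ Finset.Icc 1 (i - 1), b ^ (i - i' - 1) := by
              rw [Finset.mul_sum]; refine Finset.sum_congr rfl fun i' _ => ?_; ring
          _ ≤ (lam * f ^ m / 0.9) * (1 - b)⁻¹ := by
              apply mul_le_mul_of_nonneg_left hgeom (by positivity)
          _ = lam * f ^ m / (0.9 * (0.86 - f ^ τ)) := by
              rw [h1b]; field_simp
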